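/- arXiv:1006.1132 — 7 statements merged into one kernel-verified Lean document; each statement's English description precedes it below -/
import Mathlib

section
/- With P_n and Q_n as defined by the recursions P_{-1}=0, P_0=1, x·P_n = P_{n+1} + αt·P_n + t·P_{n-1}, and Q_0=1, x·Q_0 = Q_1, x·Q_n = Q_{n+1} + αt·Q_n + t·Q_{n-1} for n ≥ 1, one has for all n ≥ 0 the identity (1 + αx)·P_n(x,t) = α·Q_{n+1}(x,t) + Q_n(x,t). -/
open Polynomial

/-- With `P` and `Q` as in the three-term recursions,
`(1 + αx)·Pₙ = α·Qₙ₊₁ + Qₙ` for all `n ≥ 0`. -/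
theorem one_add_alpha_x_mul_P (α t : ℝ) (P Q : ℕ → ℝ[X])
    (hP0 : P 0 = 1)
    (hP1 : X * P 0 = P 1 + C (α * t) * P 0)
    (hP : ∀ n, 1 ≤ n → X * P n = P (n + 1) + C (α * t) * P n + C t * P (n - 1))
    (hQ0 : Q 0 = 1)
    (hQ1 : X * Q 0 = Q 1)
    (hQ : ∀ n, 1 ≤ n → X * Q n = Q (n + 1) + C (α * t) * Q n + C t * Q (n - 1)) :
    ∀ n, (1 + C α * X) * P n = C α * Q (n + 1) + Q n := by
  have key : ∀ n, ((1 + C α * X) * P n = C α * Q (n + 1) + Q n) ∧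
      ((1 + C α * X) * P (n + 1) = C α * Q (n + 2) + Q (n + 1)) := by
    intro n
    induction n with
    | zero =>
      constructor
      · rw [hP0, hQ0]
        rw [hQ0] at hQ1
        linear_combination (C α) * hQ1
      · have e1 := hP1
        have e2 := hQ 1 le_rfl
        simp only [hP0, hQ0, C_mul] at e1 e2 ⊢
        rw [hQ0] at hQ1
        linear_combination (-(1 + C α * X)) * e1 + C α * e2 +
          (1 + C α * X - C α * C α * C t) * hQ1
    | succ n ih =>
      obtain ⟨ih1, ih2⟩ := ih
      refine ⟨ih2, ?_⟩
      have e1 := hP (n + 1) (by omega)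
      have e2 := hQ (n + 1) (by omega)
      have e3 := hQ (n + 2) (by omega)
      simp only [Nat.add_sub_cancel, show n+2-1=n+1 from rfl, C_mul] at e1 e2 e3
      linear_combination (-(1 + C α * X)) * e1 + (X - C α * C t) * ih2 -
        C t * ih1 + C α * e3 + e2
  exact fun n => (key n).1
end

section
/- The measure μ_t defined by density (1/(2πt))·√((4t − (x − αt)²)₊)/(1 + αx) dx plus the atom max(1 − 1/(α²t), 0)·δ_{−1/α} is a probability measure, i.e., it has total mass 1, for every t > 0 and every real α ≠ 0. -/
open MeasureTheory Real

noncomputable def Fab (a b u : ℝ) : ℝ :=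
  Real.sqrt (1 - u ^ 2) / b + a / b ^ 2 * Real.arcsin u
    - Real.sqrt (a ^ 2 - b ^ 2) / b ^ 2 * Real.arcsin ((a * u + b) / (a + b * u))

lemma denom_pos {a b u : ℝ} (hb : b ≠ 0) (hba : |b| ≤ a) (hu1 : -1 < u) (hu2 : u < 1) :
    0 < a + b * u := by
  rcases lt_trichotomy b 0 with h | h | h
  · rw [abs_of_neg h] at hba; nlinarith
  · exact absurd h hb
  · rw [abs_of_pos h] at hba; nlinarith

lemma Fab_deriv {a b : ℝ} (hb : b ≠ 0) (hba : |b| ≤ a) {x : ℝ}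
    (hx : x ∈ Set.Ioo (-1:ℝ) 1) :
    HasDerivAt (Fab a b) (Real.sqrt (1 - x ^ 2) / (a + b * x)) x := by
  have hx1 : -1 < x := hx.1
  have hx2 : x < 1 := hx.2
  have hs2 : 0 < 1 - x ^ 2 := by nlinarith
  set S := Real.sqrt (1 - x ^ 2) with hS
  have hs : 0 < S := Real.sqrt_pos.mpr hs2
  have hss : S ^ 2 = 1 - x ^ 2 := Real.sq_sqrt hs2.le
  have hD : 0 < a + b * x := denom_pos hb hba hx1 hx2
  have h1 : HasDerivAt (fun u : ℝ => Real.sqrt (1 - u ^ 2) / b)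
      ((-(2 * x)) / (2 * S) / b) x := by
    have hpow : HasDerivAt (fun u : ℝ => 1 - u ^ 2) (-(2 * x)) x := by
      simpa using ((hasDerivAt_pow 2 x).const_sub 1)
    exact (hpow.sqrt hs2.ne').div_const b
  have h2 : HasDerivAt (fun u : ℝ => a / b ^ 2 * Real.arcsin u)
      (a / b ^ 2 * (1 / S)) x :=
    (Real.hasDerivAt_arcsin (by linarith) (by linarith)).const_mul _
  rcases lt_or_eq_of_le hba with hlt | heq
  · -- |b| < a
    have hc2 : 0 < a ^ 2 - b ^ 2 := by
      rcases abs_cases b with ⟨h, _⟩ | ⟨h, _⟩ <;> nlinarith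
    set C := Real.sqrt (a ^ 2 - b ^ 2) with hC
    have hc : 0 < C := Real.sqrt_pos.mpr hc2
    have hcc : C ^ 2 = a ^ 2 - b ^ 2 := Real.sq_sqrt hc2.le
    set y : ℝ := (a * x + b) / (a + b * x) with hy
    have hy2 : 1 - y ^ 2 = (a ^ 2 - b ^ 2) * (1 - x ^ 2) / (a + b * x) ^ 2 := by
      have hD' : a + x * b ≠ 0 := by linarith
      rw [hy]; field_simp; ring
    have hy2pos : 0 < 1 - y ^ 2 := by rw [hy2]; positivity
    have hsq : (C * S / (a + b * x)) ^ 2 = 1 - y ^ 2 := by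
      rw [hy2, div_pow, mul_pow, hss, hcc]
    have hsy : Real.sqrt (1 - y ^ 2) = C * S / (a + b * x) := by
      rw [← hsq, Real.sqrt_sq (by positivity)]
    have hyne1 : y ≠ 1 := by intro h; rw [h] at hy2pos; norm_num at hy2pos
    have hyne1' : y ≠ -1 := by intro h; rw [h] at hy2pos; norm_num at hy2pos
    have hyd : HasDerivAt (fun u : ℝ => (a * u + b) / (a + b * u))
        ((a * (a + b * x) - (a * x + b) * b) / (a + b * x) ^ 2) x := by
      have := (((hasDerivAt_id x).const_mul a).add_const b).div
        (((hasDerivAt_id x).const_mul b).const_add a) hD.ne'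
      refine this.congr_deriv (Eq.symm ?_)
      simp only [id_eq, mul_one]
    have h3 : HasDerivAt (fun u : ℝ => C / b ^ 2
          * Real.arcsin ((a * u + b) / (a + b * u)))
        (C / b ^ 2
          * (1 / Real.sqrt (1 - y ^ 2) * ((a * (a + b * x) - (a * x + b) * b) / (a + b * x) ^ 2))) x :=
      ((Real.hasDerivAt_arcsin hyne1' hyne1).comp x hyd).const_mul _
    have hT : C / b ^ 2
          * (1 / Real.sqrt (1 - y ^ 2) * ((a * (a + b * x) - (a * x + b) * b) / (a + b * x) ^ 2))
        = (a ^ 2 - b ^ 2) / (b ^ 2 * S * (a + b * x)) := by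
      rw [hsy, show a * (a + b * x) - (a * x + b) * b = a ^ 2 - b ^ 2 by ring]
      field_simp
    have := (h1.add h2).sub h3
    rw [hT] at this
    refine this.congr_deriv (Eq.symm ?_)
    have hgoal : (-(2 * x)) / (2 * S) / b + a / b ^ 2 * (1 / S)
        - (a ^ 2 - b ^ 2) / (b ^ 2 * S * (a + b * x)) = S / (a + b * x) := by
      have hD' : a + x * b ≠ 0 := by linarith
      field_simp
      linear_combination (-b^2) * hss
    rw [hgoal]
  · -- |b| = a
    have hc0 : a ^ 2 - b ^ 2 = 0 := by
      rcases abs_cases b with ⟨h, _⟩ | ⟨h, _⟩ <;> nlinarith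
    have hab2 : a ^ 2 = b ^ 2 := by linarith
    have hFab : Fab a b = fun u : ℝ => Real.sqrt (1 - u ^ 2) / b + a / b ^ 2 * Real.arcsin u := by
      funext u
      simp [Fab, hc0]
    rw [hFab]
    have := h1.add h2
    refine this.congr_deriv (Eq.symm ?_)
    have hgoal : (-(2 * x)) / (2 * S) / b + a / b ^ 2 * (1 / S) = S / (a + b * x) := by
      have hD' : a + x * b ≠ 0 := by linarith
      field_simp
      linear_combination (-b^2) * hss + hc0
    rw [hgoal]

lemma Fab_cont {a b : ℝ} (hb : b ≠ 0) (hba : |b| ≤ a) :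
    ContinuousOn (Fab a b) (Set.Icc (-1:ℝ) 1) := by
  rcases lt_or_eq_of_le hba with hlt | heq
  · have hD : ∀ u ∈ Set.Icc (-1:ℝ) 1, a + b * u ≠ 0 := by
      intro u hu
      rcases abs_cases b with ⟨h, _⟩ | ⟨h, _⟩ <;> nlinarith [hu.1, hu.2]
    apply ContinuousOn.sub
    · apply ContinuousOn.add
      · exact ((Real.continuous_sqrt.comp (by continuity)).continuousOn).div_const b
      · exact continuousOn_const.mul Real.continuous_arcsin.continuousOn
    · apply ContinuousOn.mul continuousOn_const
      exact Real.continuous_arcsin.comp_continuousOn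
        (((continuous_const.mul continuous_id).add continuous_const).continuousOn.div
          ((continuous_const.add (continuous_const.mul continuous_id)).continuousOn) hD)
  · have hc0 : a ^ 2 - b ^ 2 = 0 := by
      rcases abs_cases b with ⟨h, _⟩ | ⟨h, _⟩ <;> nlinarith
    have hFab : Fab a b = fun u : ℝ => Real.sqrt (1 - u ^ 2) / b + a / b ^ 2 * Real.arcsin u := by
      funext u; simp [Fab, hc0]
    rw [hFab]
    apply ContinuousOn.add
    · exact ((Real.continuous_sqrt.comp (by continuity)).continuousOn).div_const b
    · exact continuousOn_const.mul Real.continuous_arcsin.continuousOn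

lemma Fab_val {a b : ℝ} (hb : b ≠ 0) (hba : |b| ≤ a) :
    Fab a b 1 - Fab a b (-1) = π * (a - Real.sqrt (a ^ 2 - b ^ 2)) / b ^ 2 := by
  have hT1 : Real.sqrt (a ^ 2 - b ^ 2) / b ^ 2 * Real.arcsin ((a * 1 + b) / (a + b * 1))
      = Real.sqrt (a ^ 2 - b ^ 2) / b ^ 2 * (π / 2) := by
    rcases eq_or_ne (a + b) 0 with h | h
    · have ha : a = -b := by linarith
      have : a ^ 2 - b ^ 2 = 0 := by rw [ha]; ring
      simp [this]
    · rw [show (a * 1 + b) / (a + b * 1) = 1 by rw [mul_one, mul_one]; exact div_self h,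
        Real.arcsin_one]
  have hT2 : Real.sqrt (a ^ 2 - b ^ 2) / b ^ 2 * Real.arcsin ((a * (-1) + b) / (a + b * (-1)))
      = Real.sqrt (a ^ 2 - b ^ 2) / b ^ 2 * (-(π / 2)) := by
    rcases eq_or_ne (a - b) 0 with h | h
    · have ha : a = b := by linarith
      have : a ^ 2 - b ^ 2 = 0 := by rw [ha]; ring
      simp [this]
    · rw [show (a * (-1) + b) / (a + b * (-1)) = -1 by
        rw [show a * (-1) + b = -(a - b) by ring, show a + b * (-1) = a - b by ring,
          neg_div, div_self h], Real.arcsin_neg_one]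
  unfold Fab
  rw [hT1, hT2]
  norm_num [Real.arcsin_one, Real.arcsin_neg_one]
  ring

lemma g_key (α t : ℝ) (hα : α ≠ 0) (ht : 0 < t) :
    IntervalIntegrable (fun x => 1 / (2 * π * t) * Real.sqrt (max (4 * t - (x - α * t) ^ 2) 0)
        / (1 + α * x)) volume (α * t - 2 * Real.sqrt t) (α * t + 2 * Real.sqrt t)
    ∧ ∫ x in (α * t - 2 * Real.sqrt t)..(α * t + 2 * Real.sqrt t),
        1 / (2 * π * t) * Real.sqrt (max (4 * t - (x - α * t) ^ 2) 0) / (1 + α * x)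
      = (1 + α ^ 2 * t - |1 - α ^ 2 * t|) / (2 * α ^ 2 * t) := by
  set s := Real.sqrt t with hsdef
  have hs : 0 < s := Real.sqrt_pos.mpr ht
  have hst : s ^ 2 = t := Real.sq_sqrt ht.le
  set a := 1 + α ^ 2 * t with hadef
  set b := 2 * α * s with hbdef
  have hb : b ≠ 0 := by positivity
  have habs : |b| = 2 * |α| * s := by
    rw [hbdef, abs_mul, abs_mul, abs_of_pos hs, abs_of_pos (by norm_num : (0:ℝ) < 2)]
  have hba : |b| ≤ a := by
    rw [habs, hadef]
    nlinarith [sq_abs α, sq_nonneg (1 - |α| * s), abs_nonneg α]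
  set l := α * t - 2 * s with hldef
  set r := α * t + 2 * s with hrdef
  have hlr : l ≤ r := by rw [hldef, hrdef]; nlinarith
  set g : ℝ → ℝ := fun x => 1 / (2 * π * t) * Real.sqrt (max (4 * t - (x - α * t) ^ 2) 0)
        / (1 + α * x) with hgdef
  set Φ : ℝ → ℝ := fun x => (2 / π) * Fab a b ((x - α * t) / (2 * s)) with hΦdef
  -- basic facts about u
  have hu_mem : ∀ x ∈ Set.Ioo l r, (x - α * t) / (2 * s) ∈ Set.Ioo (-1:ℝ) 1 := by
    intro x hx
    constructor
    · rw [lt_div_iff₀ (by positivity)]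
      have := hx.1; rw [hldef] at this; linarith
    · rw [div_lt_iff₀ (by positivity)]
      have := hx.2; rw [hrdef] at this; linarith
  have hxu : ∀ x : ℝ, x - α * t = 2 * s * ((x - α * t) / (2 * s)) := by
    intro x; field_simp
  have hdenom : ∀ x : ℝ, 1 + α * x = a + b * ((x - α * t) / (2 * s)) := by
    intro x
    rw [hadef, hbdef]
    field_simp
    ring
  -- derivative of Φ
  have hΦderiv : ∀ x ∈ Set.Ioo l r, HasDerivAt Φ (g x) x := by
    intro x hx
    have hu := hu_mem x hx
    set u := (x - α * t) / (2 * s) with hudef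
    have haff : HasDerivAt (fun x : ℝ => (x - α * t) / (2 * s)) (1 / (2 * s)) x := by
      simpa using ((hasDerivAt_id x).sub_const (α * t)).div_const (2 * s)
    have hF := Fab_deriv hb hba hu
    have hcomp := (hF.comp x haff).const_mul (2 / π)
    refine hcomp.congr_deriv (Eq.symm ?_)
    have hmax : max (4 * t - (x - α * t) ^ 2) 0 = 4 * t - (x - α * t) ^ 2 := by
      apply max_eq_left
      have h1 := hu.1; have h2 := hu.2
      rw [hudef] at h1 h2
      rw [div_lt_iff₀ (by positivity)] at h2
      rw [lt_div_iff₀ (by positivity)] at h1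
      nlinarith [hst]
    have hsq : 4 * t - (x - α * t) ^ 2 = (2 * s) ^ 2 * (1 - u ^ 2) := by
      rw [hxu x, ← hudef, ← hst]; ring
    have hsqrt : Real.sqrt (4 * t - (x - α * t) ^ 2)
        = 2 * s * Real.sqrt (1 - u ^ 2) := by
      rw [hsq, Real.sqrt_mul (sq_nonneg _), Real.sqrt_sq (by positivity)]
    have hDpos : 0 < a + b * u := denom_pos hb hba hu.1 hu.2
    rw [hgdef]
    simp only
    rw [hmax, hsqrt, hdenom x, ← hudef, ← hst]
    field_simp
  -- continuity of Φ
  have hΦcont : ContinuousOn Φ (Set.Icc l r) := by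
    apply ContinuousOn.mul continuousOn_const
    apply (Fab_cont hb hba).comp
    · exact ((continuous_id.sub continuous_const).div_const _).continuousOn
    · intro x hx
      constructor
      · rw [le_div_iff₀ (by positivity)]
        have := hx.1; rw [hldef] at this; linarith
      · rw [div_le_iff₀ (by positivity)]
        have := hx.2; rw [hrdef] at this; linarith
  -- nonnegativity of g on Ioo
  have hgpos : ∀ x ∈ Set.Ioo l r, 0 ≤ g x := by
    intro x hx
    have hu := hu_mem x hx
    have hDpos : 0 < a + b * ((x - α * t) / (2 * s)) := denom_pos hb hba hu.1 hu.2
    rw [hgdef]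
    simp only
    rw [hdenom x]
    positivity
  -- integrability
  have hint : IntervalIntegrable g volume l r := by
    apply intervalIntegral.intervalIntegrable_deriv_of_nonneg (g := Φ)
    · rwa [Set.uIcc_of_le hlr]
    · rwa [min_eq_left hlr, max_eq_right hlr]
    · rwa [min_eq_left hlr, max_eq_right hlr]
  refine ⟨hint, ?_⟩
  rw [intervalIntegral.integral_eq_sub_of_hasDeriv_right_of_le hlr hΦcont
    (fun x hx => (hΦderiv x hx).hasDerivWithinAt) hint]
  have hu1 : (r - α * t) / (2 * s) = 1 := by rw [hrdef]; field_simp; ring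
  have hu2 : (l - α * t) / (2 * s) = -1 := by rw [hldef]; field_simp; ring
  rw [hΦdef]
  simp only
  rw [hu1, hu2, ← mul_sub, Fab_val hb hba]
  have hab2 : a ^ 2 - b ^ 2 = (1 - α ^ 2 * t) ^ 2 := by
    rw [hadef, hbdef]; rw [← hst]; ring
  have hb2 : b ^ 2 = 4 * α ^ 2 * t := by rw [hbdef, ← hst]; ring
  rw [hab2, Real.sqrt_sq_eq_abs, hb2]
  have hπ := Real.pi_ne_zero
  field_simp
  ring

/-- The measure `μ_t` with density `(1/(2πt))·√((4t − (x − αt)²)₊)/(1 + αx)`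
plus the atom `max(1 − 1/(α²t), 0)·δ_{−1/α}`. -/
noncomputable def muMeasure (α t : ℝ) : Measure ℝ :=
  (volume.withDensity fun x =>
    ENNReal.ofReal ((1 / (2 * π * t)) * Real.sqrt (max (4 * t - (x - α * t) ^ 2) 0)
      / (1 + α * x)))
  + ENNReal.ofReal (max (1 - 1 / (α ^ 2 * t)) 0) • Measure.dirac (-1 / α)

/-- `μ_t` is a probability measure for every `t > 0` and `α ≠ 0`. -/
theorem muMeasure_univ (α t : ℝ) (hα : α ≠ 0) (ht : 0 < t) :
    muMeasure α t Set.univ = 1 := by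
  set s := Real.sqrt t with hsdef
  have hs : 0 < s := Real.sqrt_pos.mpr ht
  have hst : s ^ 2 = t := Real.sq_sqrt ht.le
  set g : ℝ → ℝ := fun x => 1 / (2 * π * t) * Real.sqrt (max (4 * t - (x - α * t) ^ 2) 0)
        / (1 + α * x) with hgdef
  set l := α * t - 2 * s with hldef
  set r := α * t + 2 * s with hrdef
  have hlr : l ≤ r := by rw [hldef, hrdef]; nlinarith
  obtain ⟨hint, hval⟩ := g_key α t hα ht
  rw [← hsdef] at hint hval
  -- g vanishes outside [l, r]
  have hg0 : ∀ x ∉ Set.Icc l r, g x = 0 := by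
    intro x hx
    rw [Set.mem_Icc] at hx
    push_neg at hx
    have hmax : max (4 * t - (x - α * t) ^ 2) 0 = 0 := by
      apply max_eq_right
      rcases le_or_gt l x with h | h
      · have := hx h
        rw [hrdef] at this
        nlinarith [hst]
      · rw [hldef] at h
        nlinarith [hst]
    rw [hgdef]
    simp only
    rw [hmax, Real.sqrt_zero, mul_zero, zero_div]
  -- g is nonnegative on [l, r]
  have hgnn : ∀ x ∈ Set.Icc l r, 0 ≤ g x := by
    intro x hx
    have hd : 0 ≤ 1 + α * x := by
      have h1 := hx.1; have h2 := hx.2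
      rw [hldef] at h1; rw [hrdef] at h2
      rcases le_or_gt 0 α with h | h
      · nlinarith [sq_nonneg (1 - α * s), hst]
      · nlinarith [sq_nonneg (1 + α * s), hst]
    rw [hgdef]
    simp only
    apply div_nonneg _ hd
    positivity
  -- integrability on Icc
  have hIntOn : MeasureTheory.IntegrableOn g (Set.Icc l r) volume := by
    rw [IntervalIntegrable] at hint
    have h1 := hint.1
    exact h1.congr_set_ae MeasureTheory.Ioc_ae_eq_Icc.symm
  -- compute the lintegral of ofReal ∘ g
  have hlin : ∫⁻ x, ENNReal.ofReal (g x) ∂volume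
      = ENNReal.ofReal ((1 + α ^ 2 * t - |1 - α ^ 2 * t|) / (2 * α ^ 2 * t)) := by
    have hind : (fun x => ENNReal.ofReal (g x))
        = (Set.Icc l r).indicator (fun x => ENNReal.ofReal (g x)) := by
      funext x
      by_cases hx : x ∈ Set.Icc l r
      · rw [Set.indicator_of_mem hx]
      · rw [Set.indicator_of_notMem hx, hg0 x hx, ENNReal.ofReal_zero]
    rw [hind, lintegral_indicator measurableSet_Icc,
      ← MeasureTheory.ofReal_integral_eq_lintegral_ofReal hIntOn
        ((ae_restrict_iff' measurableSet_Icc).mpr (Filter.Eventually.of_forall hgnn)),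
      MeasureTheory.integral_Icc_eq_integral_Ioc,
      ← intervalIntegral.integral_of_le hlr, hval]
  -- final arithmetic
  have hat : 0 < α ^ 2 * t := by positivity
  rw [muMeasure, Measure.add_apply, MeasureTheory.withDensity_apply _ MeasurableSet.univ,
    Measure.restrict_univ, Measure.smul_apply, smul_eq_mul]
  rw [show ∫⁻ x, ENNReal.ofReal (1 / (2 * π * t) * Real.sqrt (max (4 * t - (x - α * t) ^ 2) 0)
      / (1 + α * x)) ∂volume = ∫⁻ x, ENNReal.ofReal (g x) ∂volume from rfl, hlin]
  rw [show (Measure.dirac (-1 / α)) Set.univ = 1 by simp, mul_one]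
  have hVnn : 0 ≤ (1 + α ^ 2 * t - |1 - α ^ 2 * t|) / (2 * α ^ 2 * t) := by
    apply div_nonneg _ (by positivity)
    rcases abs_cases (1 - α ^ 2 * t) with ⟨h, _⟩ | ⟨h, _⟩ <;> nlinarith
  rw [← ENNReal.ofReal_add hVnn (le_max_right _ _)]
  rw [show (1:ENNReal) = ENNReal.ofReal 1 by simp]
  congr 1
  rcases abs_cases (1 - α ^ 2 * t) with ⟨h, hle⟩ | ⟨h, hlt⟩
  · rw [h]
    have hw : max (1 - 1 / (α ^ 2 * t)) 0 = 0 := by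
      apply max_eq_right
      rw [sub_nonpos, le_div_iff₀ hat, one_mul]
      linarith
    rw [hw, add_zero]
    field_simp
    ring
  · rw [h]
    have hw : max (1 - 1 / (α ^ 2 * t)) 0 = 1 - 1 / (α ^ 2 * t) := by
      apply max_eq_left
      rw [sub_nonneg, div_le_iff₀ hat, one_mul]
      linarith
    rw [hw]
    field_simp
    ring
end

section
/- Let H(x,t,z) = (1 + tαz)/(1 − xz + t(αz + z²)) and G(x,t,z) = 1/(1 − xz + t(αz + z²)). Then, as an identity of rational functions (equivalently of formal power series in z), αz·H·G − αz·G·(1 − xz + t(αz+z²))·G + z²·H·G = −∂_t H, i.e., α(z·H(x,t,z)·G(x,t,z) − z·G(x,t,z)) + z²·H(x,t,z)·G(x,t,z) = −∂H/∂t (x,t,z). -/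
/-- With `H = (1 + tαz)/D` and `G = 1/D` where `D = 1 − xz + t(αz + z²)`, one
has `α(z·H·G − z·G) + z²·H·G = −∂H/∂t`, stated as: the map
`t ↦ H(x,t,z)` has derivative `−(α(zHG − zG) + z²HG)` at `t`. -/
theorem generator_identity (α x z t : ℝ)
    (hD : 1 - x * z + t * (α * z + z ^ 2) ≠ 0) :
    HasDerivAt (fun s => (1 + s * α * z) / (1 - x * z + s * (α * z + z ^ 2)))
      (-(α * (z * ((1 + t * α * z) / (1 - x * z + t * (α * z + z ^ 2)))
              * (1 / (1 - x * z + t * (α * z + z ^ 2)))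
            - z * (1 / (1 - x * z + t * (α * z + z ^ 2))))
        + z ^ 2 * ((1 + t * α * z) / (1 - x * z + t * (α * z + z ^ 2)))
              * (1 / (1 - x * z + t * (α * z + z ^ 2))))) t := by
  have hnum : HasDerivAt (fun s : ℝ => 1 + s * α * z) (α * z) t := by
    simpa [mul_assoc] using ((hasDerivAt_id t).mul_const (α * z)).const_add 1
  have hden : HasDerivAt (fun s : ℝ => 1 - x * z + s * (α * z + z ^ 2))
      (α * z + z ^ 2) t := by
    simpa using ((hasDerivAt_id t).mul_const (α * z + z ^ 2)).const_add (1 - x * z)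
  have h : HasDerivAt (fun s => (1 + s * α * z) / (1 - x * z + s * (α * z + z ^ 2))) _ t :=
    hnum.div hden hD
  convert h using 1
  field_simp
  ring
end

section
/- On the full Fock space F(H) over H = L²(ℝ₊), let X(g) = a⁺(g) + a⁻(g) + α⟨g⟩·(1 − P_Ω), where a⁺, a⁻ are the free creation and annihilation operators, ⟨g⟩ = ∫ g, and P_Ω is the projection onto the vacuum vector Ω. Then for any interval J ⊂ ℝ₊ with indicator χ_J, the vacuum moments ⟨Ω, X(χ_J)^n Ω⟩ are the moments of the measure μ_{|J|} with Jacobi parameters β_0 = 0, β_k = α|J| for k ≥ 1, and γ_k = |J| for all k ≥ 1. -/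
open scoped RealInnerProductSpace

/-- The `n`-th moment of the measure with Jacobi parameters `β, γ`, computed
from the tridiagonal (Jacobi) matrix `J e_k = e_{k+1} + β_k e_k + γ_k e_{k-1}`
as the `(0,0)` entry of `Jⁿ`. -/
noncomputable def jacobiMoment (β γ : ℕ → ℝ) (n : ℕ) : ℝ :=
  ((fun f : ℕ → ℝ => fun j =>
      (if j = 0 then 0 else f (j - 1)) + β j * f j + γ (j + 1) * f (j + 1))^[n]
    (fun j => if j = 0 then 1 else 0)) 0

/-- In the Fock space model, with `e n = χ_J^{⊗n}`, `e 0 = Ω` the vacuum,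
`⟨e m, e n⟩ = δ_{mn} |J|^n`, and `X = X(χ_J)` acting by
`X Ω = χ_J`, `X(χ_J^{⊗(n+1)}) = χ_J^{⊗(n+2)} + α|J|·χ_J^{⊗(n+1)} + |J|·χ_J^{⊗n}`,
the vacuum moments `⟨Ω, Xⁿ Ω⟩` are the moments of the measure with Jacobi
parameters `β₀ = 0`, `β_k = α|J|` (k ≥ 1), `γ_k = |J|` (k ≥ 1). -/
theorem fock_vacuum_moments (F : Type*) [NormedAddCommGroup F] [InnerProductSpace ℝ F]
    (α s : ℝ) (hs : 0 < s) (e : ℕ → F)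
    (he : ∀ m n, ⟪e m, e n⟫ = if m = n then s ^ n else 0)
    (Xop : F →ₗ[ℝ] F)
    (hX0 : Xop (e 0) = e 1)
    (hX : ∀ n, Xop (e (n + 1)) = e (n + 2) + (α * s) • e (n + 1) + s • e n)
    (n : ℕ) :
    ⟪e 0, (Xop ^ n) (e 0)⟫
      = jacobiMoment (fun k => if k = 0 then 0 else α * s) (fun _ => s) n := by
  classical
  set T : (ℕ → ℝ) → ℕ → ℝ := fun f j =>
      (if j = 0 then 0 else f (j - 1)) + (if j = 0 then (0:ℝ) else α * s) * f j
        + s * f (j + 1) with hT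
  set c : ℕ → ℕ → ℝ := fun n => T^[n] (fun j => if j = 0 then 1 else 0) with hc
  have hcsucc : ∀ n, c (n + 1) = T (c n) := fun n => Function.iterate_succ_apply' T n _
  have hsupp : ∀ n j, n < j → c n j = 0 := by
    intro n
    induction n with
    | zero => intro j hj; simp only [hc, Function.iterate_zero, id]; rw [if_neg (by omega)]
    | succ n ih =>
      intro j hj
      rw [hcsucc, hT]
      have h1 : c n (j - 1) = 0 := ih _ (by omega)
      have h2 : c n j = 0 := ih _ (by omega)
      have h3 : c n (j + 1) = 0 := ih _ (by omega)
      simp [h1, h2, h3]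
  have hmain : ∀ n, (Xop ^ n) (e 0) = ∑ j ∈ Finset.range (n + 1), c n j • e j := by
    intro n
    induction n with
    | zero => simp [hc]
    | succ n ih =>
      have h1 : (Xop ^ (n + 1)) (e 0) = Xop ((Xop ^ n) (e 0)) := by
        rw [pow_succ', Module.End.mul_apply]
      rw [h1, ih, map_sum]
      simp only [map_smul]
      have hL : ∑ j ∈ Finset.range (n + 1), c n j • Xop (e j)
          = ∑ j ∈ Finset.range (n + 2), c n j • Xop (e j) := by
        symm
        rw [Finset.sum_range_succ, hsupp n (n + 1) (by omega)]
        simp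
      rw [hL]
      rw [Finset.sum_range_succ' (fun j => c n j • Xop (e j)) (n + 1)]
      rw [Finset.sum_range_succ' (fun j => c (n + 1) j • e j) (n + 1)]
      simp only [hX, hX0, hcsucc, hT]
      have hβ0 : c (n+1) 0 = s * c n 1 := by rw [hcsucc, hT]; simp
      -- expand
      simp only [smul_add, smul_smul, Finset.sum_add_distrib, add_smul, if_neg (Nat.succ_ne_zero _), if_pos rfl,
        Nat.add_sub_cancel, zero_mul, zero_add, zero_smul, add_zero, one_mul, mul_comm]
      have hA : ∑ x ∈ Finset.range (n+1), c n (x+1) • e (x+2) + c n 0 • e 1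
          = ∑ x ∈ Finset.range (n+1), c n x • e (x+1) := by
        rw [Finset.sum_range_succ' (fun x => c n x • e (x+1)) n,
            Finset.sum_range_succ (fun x => c n (x+1) • e (x+2)) n,
            hsupp n (n+1) (by omega), zero_smul, add_zero]
      have hC : ∑ x ∈ Finset.range (n+1), (s * c n (x+1)) • e x
          = ∑ x ∈ Finset.range (n+1), (s * c n (x+1+1)) • e (x+1) + (s * c n 1) • e 0 := by
        rw [Finset.sum_range_succ' (fun x => (s * c n (x+1)) • e x) n,
            Finset.sum_range_succ (fun x => (s * c n (x+1+1)) • e (x+1)) n,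
            hsupp n (n+2) (by omega), mul_zero, zero_smul, add_zero]
      simp only [if_true, zero_smul, zero_mul, add_zero, zero_add]
      rw [← hA, hC]
      abel
  rw [hmain, inner_sum]
  simp only [he, real_inner_smul_right]
  rw [Finset.sum_eq_single 0]
  · norm_num
    rfl
  · intro b _ hb; simp [Ne.symm hb]
  · intro h; simp at h
end

section
/- In the Fock space model, Q_n(X(J), |J|)·Ω = χ_J^{⊗n} for every n ≥ 0 and every interval J ⊂ ℝ₊, where Q_n are the polynomials with Q_0 = 1, xQ_0 = Q_1, xQ_n = Q_{n+1} + α|J|·Q_n + |J|·Q_{n−1} (n ≥ 1), X(J) is the Fock space operator associated to χ_J, and Ω is the vacuum vector. -/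
open Polynomial

/-- In the Fock space model, `Qₙ(X(J), |J|)·Ω = χ_J^{⊗n}`: with `e n = χ_J^{⊗n}`,
`e 0 = Ω`, `X(J)` acting by `X Ω = χ_J` and
`X(χ_J^{⊗(n+1)}) = χ_J^{⊗(n+2)} + α|J|·χ_J^{⊗(n+1)} + |J|·χ_J^{⊗n}`, and `Qₙ`
the polynomials with `Q₀ = 1`, `x·Q₀ = Q₁`, `x·Qₙ = Qₙ₊₁ + α|J|·Qₙ + |J|·Qₙ₋₁`,
one has `Qₙ(X(J))·Ω = e n` for all `n`. -/
theorem Q_of_X_vacuum (F : Type*) [AddCommGroup F] [Module ℝ F]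
    (α s : ℝ) (e : ℕ → F) (Xop : Module.End ℝ F)
    (hX0 : Xop (e 0) = e 1)
    (hX : ∀ n, Xop (e (n + 1)) = e (n + 2) + (α * s) • e (n + 1) + s • e n)
    (Q : ℕ → ℝ[X])
    (hQ0 : Q 0 = 1)
    (hQ1 : Polynomial.X * Q 0 = Q 1)
    (hQ : ∀ n, 1 ≤ n → Polynomial.X * Q n
      = Q (n + 1) + Polynomial.C (α * s) * Q n + Polynomial.C s * Q (n - 1)) :
    ∀ n, (Polynomial.aeval Xop (Q n)) (e 0) = e n := by
  intro n
  induction n using Nat.strong_induction_on with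
  | _ n ih =>
    match n with
    | 0 => simp [hQ0]
    | 1 =>
      rw [← hQ1, hQ0, mul_one]
      simpa using hX0
    | (m + 2) =>
      have h := hQ (m + 1) (Nat.le_add_left 1 m)
      simp only [Nat.add_sub_cancel] at h
      have hQsucc : Q (m + 2)
          = Polynomial.X * Q (m + 1) - Polynomial.C (α * s) * Q (m + 1)
            - Polynomial.C s * Q m := by
        rw [h]; ring
      have h1 := ih (m + 1) (by omega)
      have h2 := ih m (by omega)
      rw [hQsucc]
      simp only [map_sub, map_mul, aeval_X, aeval_C, LinearMap.sub_apply,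
        Module.End.mul_apply, Module.algebraMap_end_apply, LinearMap.smul_apply,
        h1, h2, hX m, smul_smul]
      abel
end

section
/- For α ≠ 0 and t > 1/α², the vector η = ∑_{n≥0} (−1/(αt))^n · χ_{[0,t)}^{⊗n} in the full Fock space of L²(ℝ₊) has finite norm √(∑_{n≥0} (1/(α²t))^n) = √(α²t/(α²t − 1)), and it satisfies (1 + α X(t))·η = 0, where X(t) is the Fock-space operator X(t)Ω = χ_{[0,t)}, X(t)(f₁⊗...⊗fₙ) = χ_{[0,t)}⊗f₁⊗...⊗fₙ + αt·f₁⊗...⊗fₙ + ⟨χ_{[0,t)}, f₁⟩f₂⊗...⊗fₙ. -/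
open scoped RealInnerProductSpace

/-- For `α ≠ 0` and `t > 1/α²`, the vector `η = ∑ (−1/(αt))ⁿ χ_{[0,t)}^{⊗n}`
(with `e n = χ_{[0,t)}^{⊗n}`, `⟨e m, e n⟩ = δ_{mn} tⁿ`) is well defined, has
norm `√(α²t/(α²t − 1))`, and satisfies `(1 + αX(t))·η = 0`. -/
theorem eta_in_kernel (F : Type*) [NormedAddCommGroup F] [InnerProductSpace ℝ F]
    [CompleteSpace F] (α t : ℝ) (hα : α ≠ 0) (ht : 1 / α ^ 2 < t)
    (e : ℕ → F)
    (he : ∀ m n, ⟪e m, e n⟫ = if m = n then t ^ n else 0)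
    (Xop : F →L[ℝ] F)
    (hX0 : Xop (e 0) = e 1)
    (hX : ∀ n, Xop (e (n + 1)) = e (n + 2) + (α * t) • e (n + 1) + t • e n) :
    Summable (fun n : ℕ => (-(1 / (α * t))) ^ n • e n) ∧
      ‖∑' n : ℕ, (-(1 / (α * t))) ^ n • e n‖
        = Real.sqrt (α ^ 2 * t / (α ^ 2 * t - 1)) ∧
      (∑' n : ℕ, (-(1 / (α * t))) ^ n • e n)
        + α • Xop (∑' n : ℕ, (-(1 / (α * t))) ^ n • e n) = 0 := by
  have hα2 : (0:ℝ) < α ^ 2 := by positivity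
  have ht0 : 0 < t := lt_trans (by positivity) ht
  have hat : 1 < α ^ 2 * t := by
    rw [div_lt_iff₀ hα2] at ht; linarith
  set c : ℕ → ℝ := fun n => (-(1 / (α * t))) ^ n with hc
  set r : ℝ := 1 / (α ^ 2 * t) with hrdef
  have hr0 : 0 ≤ r := by positivity
  have hr1 : r < 1 := by
    rw [hrdef, div_lt_one (by linarith)]; linarith
  have htne : t ≠ 0 := ne_of_gt ht0
  have hsq : ∀ (x : ℝ), 0 ≤ x → ∀ n : ℕ, (Real.sqrt x ^ n) ^ 2 = x ^ n := by
    intro x hx n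
    rw [← pow_mul, Nat.mul_comm, pow_mul, Real.sq_sqrt hx]
  have hcc : ∀ n, c n ^ 2 * t ^ n = r ^ n := by
    intro n
    have : c n ^ 2 * t ^ n = ((-(1 / (α * t))) ^ 2 * t) ^ n := by
      rw [mul_pow, ← pow_mul, ← pow_mul, Nat.mul_comm]
    rw [this, hrdef]
    congr 1
    field_simp
  -- norms of basis vectors
  have hen : ∀ n, ‖e n‖ = Real.sqrt t ^ n := by
    intro n
    have h1 : ‖e n‖ ^ 2 = t ^ n := by
      rw [← real_inner_self_eq_norm_sq, he]; simp
    have h2 : (Real.sqrt t ^ n) ^ 2 = t ^ n := hsq t ht0.le n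
    nlinarith [norm_nonneg (e n), pow_nonneg (Real.sqrt_nonneg t) n,
      sq_nonneg (‖e n‖ - Real.sqrt t ^ n), sq_nonneg (‖e n‖ + Real.sqrt t ^ n)]
  have hstne : ∀ n : ℕ, (Real.sqrt t) ^ n ≠ 0 := fun n =>
    pow_ne_zero n (Real.sqrt_ne_zero'.2 ht0)
  -- orthonormal family
  set u : ℕ → F := fun n => ((Real.sqrt t) ^ n)⁻¹ • e n with hu
  have huo : Orthonormal ℝ u := by
    rw [orthonormal_iff_ite]
    intro m n
    simp only [hu, real_inner_smul_left, real_inner_smul_right, he]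
    by_cases h : m = n
    · subst h
      simp only [if_pos rfl]
      have h2 : (Real.sqrt t ^ m) * (Real.sqrt t ^ m) = t ^ m := by
        rw [← sq, hsq t ht0.le]
      field_simp
      simp only [if_true, mul_one]
      linarith [h2, hsq t ht0.le m]
    · simp [h]
  -- summability
  have hsum : Summable (fun n : ℕ => c n • e n) := by
    have key := (huo.orthogonalFamily.summable_iff_norm_sq_summable
      (fun n => c n * (Real.sqrt t) ^ n)).2 ?_
    · have heq : (fun n => (LinearIsometry.toSpanSingleton ℝ F (huo.1 n))
          (c n * (Real.sqrt t) ^ n)) = fun n => c n • e n := by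
        funext n
        rw [LinearIsometry.toSpanSingleton_apply]
        simp only [hu, smul_smul]
        congr 1
        field_simp
      rwa [heq] at key
    · have : (fun n => ‖c n * (Real.sqrt t) ^ n‖ ^ 2) = fun n => r ^ n := by
        funext n
        rw [norm_mul, mul_pow, Real.norm_eq_abs, Real.norm_eq_abs, sq_abs,
          sq_abs, hsq t ht0.le]
        exact hcc n
      rw [this]
      exact summable_geometric_of_lt_one hr0 hr1
  set η : F := ∑' n : ℕ, c n • e n with hηdef
  have hη : HasSum (fun n : ℕ => c n • e n) η := hsum.hasSum
  refine ⟨hsum, ?_, ?_⟩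
  · -- norm
    have hps : ∀ N : ℕ, ‖∑ n ∈ Finset.range N, c n • e n‖ ^ 2
        = ∑ n ∈ Finset.range N, r ^ n := by
      intro N
      rw [← real_inner_self_eq_norm_sq, sum_inner]
      refine Finset.sum_congr rfl fun m hm => ?_
      simp only [inner_sum, real_inner_smul_left, real_inner_smul_right, he,
        mul_ite, mul_zero]
      rw [Finset.sum_ite_eq, if_pos hm, ← hcc m]
      ring
    have h1 : Filter.Tendsto (fun N => ‖∑ n ∈ Finset.range N, c n • e n‖ ^ 2)
        Filter.atTop (nhds (‖η‖ ^ 2)) := (hη.tendsto_sum_nat.norm.pow 2)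
    have h2 : Filter.Tendsto (fun N => ∑ n ∈ Finset.range N, r ^ n)
        Filter.atTop (nhds ((1 - r)⁻¹)) :=
      (hasSum_geometric_of_lt_one hr0 hr1).tendsto_sum_nat
    have h3 : ‖η‖ ^ 2 = (1 - r)⁻¹ := by
      refine tendsto_nhds_unique ?_ h2
      simpa only [hps] using h1
    have h4 : (1 - r)⁻¹ = α ^ 2 * t / (α ^ 2 * t - 1) := by
      rw [hrdef]
      rw [show (1 : ℝ) - 1 / (α ^ 2 * t) = (α ^ 2 * t - 1) / (α ^ 2 * t) by
        field_simp]
      rw [inv_div]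
    rw [← Real.sqrt_sq (norm_nonneg η), h3, h4]
  · -- kernel property
    have hsumX : Summable (fun n : ℕ => c n • Xop (e n)) := by
      have := (hη.mapL Xop).summable
      simpa only [map_smul] using this
    set w : ℕ → F := fun n => c n • e n + α • (c n • Xop (e n)) with hw
    have hwsum : Summable w := hsum.add (hsumX.const_smul α)
    have hXη : Xop η = ∑' n : ℕ, c n • Xop (e n) := by
      rw [hηdef, ContinuousLinearMap.map_tsum Xop hsum]
      simp only [map_smul]
    have hwval : ∑' n, w n = η + α • Xop η := by
      rw [hw, Summable.tsum_add hsum (hsumX.const_smul α), hXη, Summable.tsum_const_smul α hsumX]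
    -- telescoping
    set v : ℕ → F := fun n => c n • e n + (α * c n) • e (n + 1) with hv
    have hrec : ∀ N : ℕ, ∑ k ∈ Finset.range (N + 1), w k = v N := by
      intro N
      induction N with
      | zero => simp [hw, hv, hc, hX0]
      | succ n ih =>
        rw [Finset.sum_range_succ, ih]
        simp only [hw, hv, hX n]
        have hcs : c (n + 1) = c n * (-(1 / (α * t))) := pow_succ _ n
        rw [hcs]
        match_scalars <;> field_simp <;> ring
    have hv0 : Filter.Tendsto v Filter.atTop (nhds 0) := by
      have hb : ∀ n, ‖v n‖ ≤ (1 + |α| * Real.sqrt t) * Real.sqrt r ^ n := by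
        intro n
        have hcn : |c n| = Real.sqrt r ^ n * (Real.sqrt t ^ n)⁻¹ := by
          have h1 : |c n| ^ 2 = (Real.sqrt r ^ n * (Real.sqrt t ^ n)⁻¹) ^ 2 := by
            rw [sq_abs, mul_pow, inv_pow, hsq r hr0, hsq t ht0.le]
            rw [eq_comm, mul_inv_eq_iff_eq_mul₀ (pow_ne_zero n htne)]
            linarith [hcc n]
          have h2 : 0 ≤ Real.sqrt r ^ n * (Real.sqrt t ^ n)⁻¹ := by positivity
          nlinarith [abs_nonneg (c n),
            sq_nonneg (|c n| - Real.sqrt r ^ n * (Real.sqrt t ^ n)⁻¹),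
            sq_nonneg (|c n| + Real.sqrt r ^ n * (Real.sqrt t ^ n)⁻¹)]
        have h1 : ‖c n • e n‖ = Real.sqrt r ^ n := by
          rw [norm_smul, Real.norm_eq_abs, hcn, hen]
          field_simp
        have h2 : ‖(α * c n) • e (n + 1)‖ = |α| * Real.sqrt t * Real.sqrt r ^ n := by
          rw [norm_smul, Real.norm_eq_abs, abs_mul, hcn, hen, pow_succ]
          field_simp
        calc ‖v n‖ ≤ ‖c n • e n‖ + ‖(α * c n) • e (n + 1)‖ := norm_add_le _ _
          _ = (1 + |α| * Real.sqrt t) * Real.sqrt r ^ n := by rw [h1, h2]; ring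
      refine squeeze_zero_norm hb ?_
      rw [show (0:ℝ) = (1 + |α| * Real.sqrt t) * 0 by ring]
      have hsr1 : Real.sqrt r < 1 := by
        rw [show (1:ℝ) = Real.sqrt 1 by simp]
        exact Real.sqrt_lt_sqrt hr0 (by simpa using hr1)
      exact (tendsto_pow_atTop_nhds_zero_of_lt_one (Real.sqrt_nonneg r)
        hsr1).const_mul _
    have hlim : Filter.Tendsto (fun N => ∑ k ∈ Finset.range (N + 1), w k)
        Filter.atTop (nhds (∑' n, w n)) :=
      hwsum.hasSum.tendsto_sum_nat.comp (Filter.tendsto_add_atTop_nat 1)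
    have hzero : ∑' n, w n = 0 := by
      refine tendsto_nhds_unique ?_ hv0
      simpa only [hrec] using hlim
    rw [← hwval, hzero]
end

section
/- For α ≠ 0, t > 1/α², and 0 < s < t, the vector η(s) := (X(s) + s/(αt))·η, where η = ∑_{n≥0}(−1/(αt))^n χ_{[0,t)}^{⊗n}, equals χ_{[0,s)} ⊗ η + αs·(η − Ω), and is orthogonal to the vacuum vector Ω. -/
set_option maxHeartbeats 1000000


open scoped RealInnerProductSpace

theorem sqrt_pow_aux (t : ℝ) (ht : 0 ≤ t) (n : ℕ) :
    Real.sqrt (t ^ n) = Real.sqrt t ^ n := by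
  have h : (Real.sqrt t ^ n) ^ 2 = t ^ n := by
    rw [← pow_mul, mul_comm, pow_mul, Real.sq_sqrt ht]
  rw [← h, Real.sqrt_sq (by positivity)]

/-- For `α ≠ 0`, `t > 1/α²`, `0 < s < t`, with `e n = χ_{[0,t)}^{⊗n}` (so
`e 0 = Ω`), `f n = χ_{[0,s)} ⊗ χ_{[0,t)}^{⊗n}` (so `f 0 = χ_{[0,s)}`), and
`X(s)` acting by `X(s)Ω = χ_{[0,s)}`,
`X(s)(e (n+1)) = f (n+1) + αs·e (n+1) + s·e n`, the vector
`η(s) = (X(s) + s/(αt))·η` (where `η = ∑ (−1/(αt))ⁿ e n`) equals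
`χ_{[0,s)} ⊗ η + αs(η − Ω)` and is orthogonal to the vacuum `Ω`. -/
theorem eta_s_perp_vacuum (F : Type*) [NormedAddCommGroup F] [InnerProductSpace ℝ F]
    [CompleteSpace F] (α t s : ℝ) (hα : α ≠ 0) (ht : 1 / α ^ 2 < t)
    (hs : 0 < s) (hst : s < t)
    (e f : ℕ → F)
    (he : ∀ m n, ⟪e m, e n⟫ = if m = n then t ^ n else 0)
    (hf : ∀ m n, ⟪f m, f n⟫ = if m = n then s * t ^ n else 0)
    (hef : ∀ n, ⟪e 0, f n⟫ = 0)
    (Xs : F →L[ℝ] F)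
    (hX0 : Xs (e 0) = f 0)
    (hX : ∀ n, Xs (e (n + 1)) = f (n + 1) + (α * s) • e (n + 1) + s • e n) :
    (Xs (∑' n : ℕ, (-(1 / (α * t))) ^ n • e n)
        + (s / (α * t)) • (∑' n : ℕ, (-(1 / (α * t))) ^ n • e n)
      = (∑' n : ℕ, (-(1 / (α * t))) ^ n • f n)
        + (α * s) • ((∑' n : ℕ, (-(1 / (α * t))) ^ n • e n) - e 0)) ∧
      ⟪e 0, Xs (∑' n : ℕ, (-(1 / (α * t))) ^ n • e n)
        + (s / (α * t)) • (∑' n : ℕ, (-(1 / (α * t))) ^ n • e n)⟫ = 0 := by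
  set r : ℝ := -(1 / (α * t)) with hr
  have hα2 : (0:ℝ) < α ^ 2 := by positivity
  have ht0 : (0:ℝ) < t := lt_trans (by positivity) ht
  have h1 : (1:ℝ) < α ^ 2 * t := by
    rw [div_lt_iff₀ hα2] at ht; nlinarith
  have hst0 : (0:ℝ) < Real.sqrt t := Real.sqrt_pos.mpr ht0
  set q : ℝ := |r| * Real.sqrt t with hqdef
  have hq0 : 0 ≤ q := mul_nonneg (abs_nonneg _) (Real.sqrt_nonneg _)
  have hrabs : |r| = 1 / (|α| * t) := by
    rw [hr, abs_neg, abs_div, abs_one, abs_mul, abs_of_pos ht0]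
  have hq1 : q < 1 := by
    have hs1 : (1:ℝ) < |α| * Real.sqrt t := by
      have h2 : Real.sqrt 1 < Real.sqrt (α ^ 2 * t) := Real.sqrt_lt_sqrt (by norm_num) h1
      rwa [Real.sqrt_one, Real.sqrt_mul (sq_nonneg α), Real.sqrt_sq_eq_abs] at h2
    rw [hqdef, hrabs, div_mul_eq_mul_div, one_mul, div_lt_one (by positivity)]
    have htt : Real.sqrt t * Real.sqrt t = t := Real.mul_self_sqrt ht0.le
    nlinarith
  have hqsum : Summable (fun n : ℕ => q ^ n) := summable_geometric_of_lt_one hq0 hq1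
  -- norms and summability
  have hne : ∀ n, ‖r ^ n • e n‖ = q ^ n := by
    intro n
    have h2 : ‖e n‖ ^ 2 = t ^ n := by rw [← real_inner_self_eq_norm_sq, he n n, if_pos rfl]
    have h3 : ‖e n‖ = Real.sqrt t ^ n := by
      rw [← sqrt_pow_aux t ht0.le, ← h2, Real.sqrt_sq (norm_nonneg _)]
    rw [norm_smul, norm_pow, Real.norm_eq_abs, h3, hqdef, mul_pow]
  have hnf : ∀ n, ‖r ^ n • f n‖ = Real.sqrt s * q ^ n := by
    intro n
    have h2 : ‖f n‖ ^ 2 = s * t ^ n := by rw [← real_inner_self_eq_norm_sq, hf n n, if_pos rfl]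
    have h3 : ‖f n‖ = Real.sqrt s * Real.sqrt t ^ n := by
      rw [← sqrt_pow_aux t ht0.le, ← Real.sqrt_mul hs.le, ← h2, Real.sqrt_sq (norm_nonneg _)]
    rw [norm_smul, norm_pow, Real.norm_eq_abs, h3, hqdef, mul_pow]; ring
  have hE : Summable (fun n : ℕ => r ^ n • e n) := by
    apply Summable.of_norm; simpa only [hne] using hqsum
  have hF : Summable (fun n : ℕ => r ^ n • f n) := by
    apply Summable.of_norm; simpa only [hnf] using hqsum.mul_left (Real.sqrt s)
  set E : F := ∑' n : ℕ, r ^ n • e n with hEdef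
  set Ft : F := ∑' n : ℕ, r ^ n • f n with hFdef
  have hE1 : Summable (fun n : ℕ => r ^ (n + 1) • e (n + 1)) :=
    (summable_nat_add_iff 1).mpr hE
  have hF1 : Summable (fun n : ℕ => r ^ (n + 1) • f (n + 1)) :=
    (summable_nat_add_iff 1).mpr hF
  -- X applied to the series
  have hXsum : Summable (fun n : ℕ => r ^ n • Xs (e n)) := by
    have := hE.map Xs Xs.continuous
    simpa [Function.comp_def, map_smul] using this
  have hXE : Xs E = ∑' n : ℕ, r ^ n • Xs (e n) := by
    rw [hEdef, Xs.map_tsum hE]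
    exact tsum_congr fun n => (map_smul Xs _ _)
  have hsplit : Xs E = f 0 + ∑' n : ℕ, r ^ (n + 1) • Xs (e (n + 1)) := by
    rw [hXE, Summable.tsum_eq_zero_add hXsum, pow_zero, one_smul, hX0]
  -- tail computation
  have heq : ∀ n : ℕ, r ^ (n + 1) • Xs (e (n + 1))
      = r ^ (n + 1) • f (n + 1) + (α * s) • (r ^ (n + 1) • e (n + 1))
        + (s * r) • (r ^ n • e n) := by
    intro n; rw [hX n]; module
  have hFt : (∑' n : ℕ, r ^ (n + 1) • f (n + 1)) = Ft - f 0 := by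
    have h := Summable.tsum_eq_zero_add hF
    rw [pow_zero, one_smul] at h
    rw [← hFdef] at h
    rw [h]; abel
  have hEt : (∑' n : ℕ, r ^ (n + 1) • e (n + 1)) = E - e 0 := by
    have h := Summable.tsum_eq_zero_add hE
    rw [pow_zero, one_smul] at h
    rw [← hEdef] at h
    rw [h]; abel
  have htail : (∑' n : ℕ, r ^ (n + 1) • Xs (e (n + 1)))
      = (Ft - f 0) + (α * s) • (E - e 0) + (s * r) • E := by
    calc (∑' n : ℕ, r ^ (n + 1) • Xs (e (n + 1)))
        = ∑' n : ℕ, (r ^ (n + 1) • f (n + 1) + (α * s) • (r ^ (n + 1) • e (n + 1))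
            + (s * r) • (r ^ n • e n)) := tsum_congr heq
      _ = (∑' n : ℕ, r ^ (n + 1) • f (n + 1))
            + (∑' n : ℕ, (α * s) • (r ^ (n + 1) • e (n + 1)))
            + (∑' n : ℕ, (s * r) • (r ^ n • e n)) := by
          rw [Summable.tsum_add (hF1.add (hE1.const_smul (α * s))) (hE.const_smul (s * r)),
            Summable.tsum_add hF1 (hE1.const_smul (α * s))]
      _ = (Ft - f 0) + (α * s) • (E - e 0) + (s * r) • E := by
          rw [hFt, Summable.tsum_const_smul _ hE1, Summable.tsum_const_smul _ hE, hEt, ← hEdef]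
  have hmain : Xs E + (s / (α * t)) • E = Ft + (α * s) • (E - e 0) := by
    rw [hsplit, htail]
    have hsr : s * r = -(s / (α * t)) := by rw [hr]; ring
    rw [hsr, neg_smul]
    abel
  refine ⟨hmain, ?_⟩
  rw [hmain]
  have hinF : ⟪e 0, Ft⟫ = 0 := by
    have h := (innerSL ℝ (e 0)).map_tsum hF
    simp only [innerSL_apply_apply] at h
    rw [hFdef, h]
    simp only [real_inner_smul_right, hef, mul_zero]
    exact tsum_zero
  have hinE : ⟪e 0, E⟫ = 1 := by
    have h := (innerSL ℝ (e 0)).map_tsum hE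
    simp only [innerSL_apply_apply] at h
    rw [hEdef, h]
    have h2 : (∑' n : ℕ, ⟪e 0, r ^ n • e n⟫) = ⟪e 0, r ^ 0 • e 0⟫ := by
      apply tsum_eq_single
      intro n hn
      simp only [real_inner_smul_right, he 0 n, if_neg (Ne.symm hn), mul_zero]
    rw [h2]
    rw [pow_zero, one_smul, he 0 0, if_pos rfl, pow_zero]
  have hin00 : ⟪e 0, e 0⟫ = 1 := by simpa using he 0 0
  rw [inner_add_right, hinF, real_inner_smul_right, inner_sub_right, hinE, hin00]
  ring
end
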